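/- arXiv:1609.03241 — 4 statements merged into one kernel-verified Lean document; each statement's English description precedes it below -/
import Mathlib

section
/- For p ≥ 3 and b ≥ 1, lim_{v→∞} (log v) · [∫₀¹ λ^{p/2−2}(log(1/λ))^{b−1} e^{−vλ/2} dλ] / [∫₀¹ λ^{p/2−2}(log(1/λ))^{b} e^{−vλ/2} dλ] = 1. -/
/-!
Substituting `x = t / v` turns `v ^ (c + 1) / (log v) ^ β · ∫₀¹ x ^ c (log (1/x)) ^ β e^{-vx/2} dx`
into `∫₀^v t ^ c (1 - log t / log v) ^ β e^{-t/2} dt`, which tends to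
`∫₀^∞ t ^ c e^{-t/2} dt = 2 ^ (c + 1) Γ(c + 1)` by dominated convergence. So the integral is
asymptotic to `Γ(c + 1) (2/v) ^ (c + 1) (log v) ^ β`, and in the ratio of the theorem everything
but one factor `log v` cancels.
-/

open MeasureTheory Filter Real Set Topology Asymptotics

noncomputable def logLaplaceIntegral (c β v : ℝ) : ℝ :=
  ∫ x in Ioo (0 : ℝ) 1, x ^ c * log (1 / x) ^ β * exp (-v * x / 2)

section
variable {c β v : ℝ}

lemma rpow_mul_logLaplaceIntegral (hv : 0 < v) :
    v ^ (c + 1) * logLaplaceIntegral c β v =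
      ∫ t in Ioo 0 v, t ^ c * (log v - log t) ^ β * exp (-t / 2) := by
  set g : ℝ → ℝ := fun x => x ^ c * log (1 / x) ^ β * exp (-v * x / 2)
  have hg : ∀ t ∈ Ioo 0 v, t ^ c * (log v - log t) ^ β * exp (-t / 2) = v ^ c * g (t / v) := by
    intro t ht
    simp only [g, one_div_div, log_div hv.ne' ht.1.ne', div_rpow ht.1.le hv.le]
    field_simp
  rw [setIntegral_congr_fun measurableSet_Ioo hg, integral_const_mul,
    ← integral_Ioc_eq_integral_Ioo, ← intervalIntegral.integral_of_le hv.le,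
    intervalIntegral.integral_comp_div g hv.ne', zero_div, div_self hv.ne',
    intervalIntegral.integral_of_le zero_le_one, integral_Ioc_eq_integral_Ioo, smul_eq_mul,
    rpow_add_one hv.ne', mul_assoc]
  rfl

lemma rpow_mul_logLaplaceIntegral_div_log_rpow (hv : 1 < v) :
    v ^ (c + 1) * logLaplaceIntegral c β v / log v ^ β =
      ∫ t in Ioi 0, (Iio v).indicator
        (fun t => t ^ c * (1 - log t / log v) ^ β * exp (-t / 2)) t := by
  have hlog : 0 < log v := log_pos hv
  rw [integral_indicator measurableSet_Iio, Measure.restrict_restrict measurableSet_Iio,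
    Iio_inter_Ioi, rpow_mul_logLaplaceIntegral (by linarith), ← integral_div]
  refine setIntegral_congr_fun measurableSet_Ioo fun t ht => ?_
  have hlt : log t ≤ log v := log_le_log ht.1 ht.2.le
  rw [mul_div_right_comm, mul_div_assoc, ← div_rpow (by linarith) hlog.le,
    sub_div, div_self hlog.ne']

lemma one_add_rpow_le_exp {u : ℝ} (hu : -1 ≤ u) (hβ : 0 ≤ β) : (1 + u) ^ β ≤ exp (β * u) := by
  calc (1 + u) ^ β ≤ exp u ^ β := rpow_le_rpow (by linarith) (by linarith [add_one_le_exp u]) hβ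
    _ = exp (β * u) := by rw [← exp_mul, mul_comm]

lemma one_sub_log_div_log_rpow_le {t : ℝ} (hv : 1 < v) (ht : 0 < t) (htv : t < v)
    (hβ : 0 ≤ β) : (1 - log t / log v) ^ β ≤ t ^ (-(β / log v)) := by
  have hlog : 0 < log v := log_pos hv
  have hle : log t / log v ≤ 1 := (div_le_one hlog).mpr (log_le_log ht htv.le)
  calc (1 - log t / log v) ^ β = (1 + -(log t / log v)) ^ β := by rw [sub_eq_add_neg]
    _ ≤ exp (β * -(log t / log v)) := one_add_rpow_le_exp (by linarith) hβ
    _ = t ^ (-(β / log v)) := by rw [rpow_def_of_pos ht]; ring_nf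

lemma rpow_neg_le_rpow_neg_add_one {s δ t : ℝ} (ht : 0 < t) (hs : 0 ≤ s) (hsδ : s ≤ δ) :
    t ^ (-s) ≤ t ^ (-δ) + 1 := by
  rcases le_total t 1 with h | h
  · linarith [rpow_le_rpow_of_exponent_ge ht h (neg_le_neg hsδ)]
  · linarith [rpow_le_one_of_one_le_of_nonpos h (neg_nonpos.mpr hs), rpow_pos_of_pos ht (-δ)]

lemma integrableOn_rpow_mul_exp_neg_div_two {s : ℝ} (hs : -1 < s) :
    IntegrableOn (fun t : ℝ => t ^ s * exp (-t / 2)) (Ioi 0) := by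
  refine (integrableOn_rpow_mul_exp_neg_mul_rpow hs one_pos one_half_pos).congr_fun
    (fun t _ => ?_) measurableSet_Ioi
  simp only [rpow_one]
  ring_nf

lemma integral_rpow_mul_exp_neg_div_two (hc : -1 < c) :
    ∫ t in Ioi 0, t ^ c * exp (-t / 2) = 2 ^ (c + 1) * Gamma (c + 1) := by
  have h := integral_rpow_mul_exp_neg_mul_Ioi (a := c + 1) (by linarith) one_half_pos
  rw [one_div_one_div, add_sub_cancel_right] at h
  rw [← h]
  congr 1 with t
  ring_nf

theorem tendsto_rpow_mul_logLaplaceIntegral_div_log_rpow (hc : -1 < c) (hβ : 0 ≤ β) :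
    Tendsto (fun v => v ^ (c + 1) * logLaplaceIntegral c β v / log v ^ β) atTop
      (𝓝 (2 ^ (c + 1) * Gamma (c + 1))) := by
  obtain ⟨δ, hδ, hcδ⟩ : ∃ δ, 0 < δ ∧ -1 < c - δ := ⟨(c + 1) / 2, by linarith, by linarith⟩
  rw [← integral_rpow_mul_exp_neg_div_two hc]
  have hF : Tendsto (fun v => ∫ t in Ioi 0,
      (Iio v).indicator (fun t => t ^ c * (1 - log t / log v) ^ β * exp (-t / 2)) t) atTop
      (𝓝 (∫ t in Ioi 0, t ^ c * exp (-t / 2))) := by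
    refine tendsto_integral_filter_of_dominated_convergence
      (fun t => t ^ (c - δ) * exp (-t / 2) + t ^ c * exp (-t / 2)) ?_ ?_ ?_ ?_
    · exact Eventually.of_forall fun v =>
        (Measurable.indicator (by fun_prop) measurableSet_Iio).aestronglyMeasurable
    · filter_upwards [eventually_gt_atTop 1, eventually_ge_atTop (exp (β / δ))] with v hv hvδ
      rw [ae_restrict_iff' measurableSet_Ioi]
      refine Eventually.of_forall fun t (ht : 0 < t) => ?_
      by_cases htv : t < v
      · have hlog : 0 < log v := log_pos hv
        have hβδ : β / log v ≤ δ := by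
          rw [div_le_iff₀ hlog, ← div_le_iff₀' hδ]
          exact (le_log_iff_exp_le (by linarith)).mpr hvδ
        have hbase : 0 ≤ 1 - log t / log v :=
          sub_nonneg.mpr ((div_le_one hlog).mpr (log_le_log ht htv.le))
        rw [indicator_of_mem (mem_Iio.mpr htv), norm_of_nonneg (by positivity)]
        -- `1 + u ≤ exp u` trades the logarithmic factor for the power `t ^ (-(β / log v))`
        calc t ^ c * (1 - log t / log v) ^ β * exp (-t / 2)
            ≤ t ^ c * t ^ (-(β / log v)) * exp (-t / 2) := by
              gcongr; exact one_sub_log_div_log_rpow_le hv ht htv hβ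
          _ ≤ t ^ c * (t ^ (-δ) + 1) * exp (-t / 2) := by
              gcongr; exact rpow_neg_le_rpow_neg_add_one ht (by positivity) hβδ
          _ = t ^ (c - δ) * exp (-t / 2) + t ^ c * exp (-t / 2) := by
              rw [rpow_sub ht, rpow_neg ht.le]; ring
      · rw [indicator_of_notMem (mt mem_Iio.mp htv), norm_zero]
        positivity
    · exact (integrableOn_rpow_mul_exp_neg_div_two hcδ).add
        (integrableOn_rpow_mul_exp_neg_div_two hc)
    · rw [ae_restrict_iff' measurableSet_Ioi]
      refine Eventually.of_forall fun t _ => ?_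
      have hlim : Tendsto (fun v => 1 - log t / log v) atTop (𝓝 1) := by
        simpa using tendsto_const_nhds.sub (tendsto_const_nhds.div_atTop tendsto_log_atTop)
      have hpow : Tendsto (fun v => t ^ c * (1 - log t / log v) ^ β * exp (-t / 2)) atTop
          (𝓝 (t ^ c * 1 ^ β * exp (-t / 2))) :=
        (tendsto_const_nhds.mul (hlim.rpow_const (Or.inl one_ne_zero))).mul tendsto_const_nhds
      rw [one_rpow, mul_one] at hpow
      refine hpow.congr' ?_
      filter_upwards [eventually_gt_atTop t] with v hv
      rw [indicator_of_mem (mem_Iio.mpr hv)]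
  refine hF.congr' ?_
  filter_upwards [eventually_gt_atTop 1] with v hv
  exact (rpow_mul_logLaplaceIntegral_div_log_rpow hv).symm

theorem logLaplaceIntegral_isEquivalent (hc : -1 < c) (hβ : 0 ≤ β) :
    logLaplaceIntegral c β ~[atTop] fun v => Gamma (c + 1) * (2 / v) ^ (c + 1) * log v ^ β := by
  have hK : (2 : ℝ) ^ (c + 1) * Gamma (c + 1) ≠ 0 :=
    (mul_pos (rpow_pos_of_pos two_pos _) (Gamma_pos_of_pos (by linarith))).ne'
  have h := (tendsto_rpow_mul_logLaplaceIntegral_div_log_rpow hc hβ).div_const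
    (2 ^ (c + 1) * Gamma (c + 1))
  rw [div_self hK] at h
  refine isEquivalent_of_tendsto_one (h.congr' ?_)
  filter_upwards [eventually_gt_atTop 1] with v hv
  have hv0 : 0 < v := by linarith
  rw [Pi.div_apply, div_rpow two_pos.le hv0.le]
  field_simp

end

/-- For p ≥ 3 and b ≥ 1,
lim_{v→∞} (log v) · [∫₀¹ λ^{p/2−2}(log(1/λ))^{b−1} e^{−vλ/2} dλ] /
  [∫₀¹ λ^{p/2−2}(log(1/λ))^{b} e^{−vλ/2} dλ] = 1. -/
theorem stmt3 (p : ℝ) (hp : 3 ≤ p) (b : ℝ) (hb : 1 ≤ b) :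
    Tendsto (fun v : ℝ => Real.log v *
      ((∫ l in Set.Ioo (0 : ℝ) 1,
          l ^ (p / 2 - 2) * Real.log (1 / l) ^ (b - 1) * Real.exp (-v * l / 2)) /
        (∫ l in Set.Ioo (0 : ℝ) 1,
          l ^ (p / 2 - 2) * Real.log (1 / l) ^ b * Real.exp (-v * l / 2))))
      atTop (nhds 1) := by
  have hc : -1 < p / 2 - 2 := by linarith
  have hA := logLaplaceIntegral_isEquivalent (β := b - 1) hc (by linarith)
  have hB := logLaplaceIntegral_isEquivalent (β := b) hc (by linarith)
  refine (IsEquivalent.refl.mul (hA.div hB)).symm.tendsto_nhds (tendsto_const_nhds.congr' ?_)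
  filter_upwards [eventually_gt_atTop 1] with v hv
  have hlog : 0 < log v := log_pos hv
  have hv0 : 0 < v := by linarith
  have hK : 0 < Gamma (p / 2 - 2 + 1) * (2 / v) ^ (p / 2 - 2 + 1) :=
    mul_pos (Gamma_pos_of_pos (by linarith)) (by positivity)
  rw [Pi.mul_apply, Pi.div_apply, mul_div_mul_left _ _ hK.ne', rpow_sub_one hlog.ne']
  field_simp
end

section
/- Define ψ(v) = v · [∫₀¹ λ^{p/2−1}(log(1/λ))^b e^{−vλ/2} dλ] / [∫₀¹ λ^{p/2−2}(log(1/λ))^b e^{−vλ/2} dλ] for v > 0, with p ≥ 3 and b ≥ 1. Then lim_{v→∞} (log v)(p − 2 − ψ(v)) = 2b. -/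
/-!
Write `a = p/2 - 1` and `L(s, c, u) = ∫₀¹ l^s (log 1/l)^c e^{-ul} dl`. Integration by parts gives
`u L(a, b, u) = a L(a-1, b, u) - b L(a-1, b-1, u)`, hence
`p - 2 - ψ(v) = 2b L(a-1, b-1, v/2) / L(a-1, b, v/2)`. The substitution `l = t/u` followed by
dominated convergence shows `L(s, c, u) ~ Γ(s+1) (log u)^c / u^(s+1)` as `u → ∞`, so the ratio
behaves like `1 / log (v/2) ~ 1 / log v`.
-/

open MeasureTheory Filter Set Real Topology

lemma neg_log_le_inv_mul_rpow_neg {t ε : ℝ} (ht : 0 < t) (hε : 0 < ε) :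
    -log t ≤ ε⁻¹ * t ^ (-ε) := by
  have h := log_le_rpow_div (inv_nonneg.2 ht.le) hε
  rwa [log_inv, inv_rpow ht.le, ← rpow_neg ht.le, div_eq_inv_mul] at h

lemma exists_pos_lt_sub_mul {r s c : ℝ} (hrs : r < s) (hc : 0 ≤ c) :
    ∃ ε > 0, r < s - ε * c := by
  refine ⟨(s - r) / (c + 1), by positivity, ?_⟩
  have : (s - r) / (c + 1) * c < s - r := by
    rw [div_mul_eq_mul_div, div_lt_iff₀ (by positivity)]
    nlinarith
  linarith

lemma rpow_mul_rpow_le_of_le_mul_rpow_neg {s c ε K t x : ℝ} (hc : 0 ≤ c) (ht : 0 < t)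
    (hK : 0 ≤ K) (hx₀ : 0 ≤ x) (hx : x ≤ K * t ^ (-ε)) : t ^ s * x ^ c ≤ K ^ c * t ^ (s - ε * c) :=
  calc t ^ s * x ^ c ≤ t ^ s * (K * t ^ (-ε)) ^ c := by gcongr
    _ = K ^ c * t ^ (s - ε * c) := by
        rw [mul_rpow hK (by positivity), ← rpow_mul ht.le, sub_eq_add_neg, rpow_add ht, neg_mul]
        ring

lemma rpow_mul_neg_log_rpow_le {s c ε t : ℝ} (hc : 0 ≤ c) (hε : 0 < ε) (ht₀ : 0 < t)
    (ht₁ : t ≤ 1) : t ^ s * (-log t) ^ c ≤ ε⁻¹ ^ c * t ^ (s - ε * c) :=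
  rpow_mul_rpow_le_of_le_mul_rpow_neg hc ht₀ (by positivity)
    (neg_nonneg.2 (log_nonpos ht₀.le ht₁)) (neg_log_le_inv_mul_rpow_neg ht₀ hε)

lemma integrableOn_rpow_mul_neg_log_rpow {s c : ℝ} (hs : -1 < s) (hc : 0 ≤ c) :
    IntegrableOn (fun t ↦ t ^ s * (-log t) ^ c) (Ioo 0 1) := by
  obtain ⟨ε, hε, hsε⟩ := exists_pos_lt_sub_mul hs hc
  refine Integrable.mono' (((intervalIntegral.integrableOn_Ioo_rpow_iff one_pos).2 hsε).const_mul
    (ε⁻¹ ^ c)) (by fun_prop) ?_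
  filter_upwards [ae_restrict_mem measurableSet_Ioo] with t ⟨ht₀, ht₁⟩
  have hlog : 0 ≤ -log t := neg_nonneg.2 (log_nonpos ht₀.le ht₁.le)
  rw [norm_of_nonneg (by positivity)]
  exact rpow_mul_neg_log_rpow_le hc hε ht₀ ht₁.le

lemma tendsto_rpow_mul_neg_log_rpow_nhdsGT_zero {s c : ℝ} (hs : 0 < s) (hc : 0 ≤ c) :
    Tendsto (fun t ↦ t ^ s * (-log t) ^ c) (𝓝[>] 0) (𝓝 0) := by
  obtain ⟨ε, hε, hsε⟩ := exists_pos_lt_sub_mul hs hc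
  have hbound : Tendsto (fun t : ℝ ↦ ε⁻¹ ^ c * t ^ (s - ε * c)) (𝓝[>] 0) (𝓝 0) := by
    have h := (continuousAt_rpow_const 0 _ (Or.inr hsε.le)).tendsto.const_mul (ε⁻¹ ^ c)
    simpa [zero_rpow hsε.ne'] using h.mono_left nhdsWithin_le_nhds
  refine squeeze_zero' ?_ ?_ hbound
  · filter_upwards [Ioo_mem_nhdsGT one_pos] with t ⟨ht₀, ht₁⟩
    have hlog : 0 ≤ -log t := neg_nonneg.2 (log_nonpos ht₀.le ht₁.le)
    positivity
  · filter_upwards [Ioo_mem_nhdsGT one_pos] with t ⟨ht₀, ht₁⟩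
    exact rpow_mul_neg_log_rpow_le hc hε ht₀ ht₁.le

noncomputable def laplaceRpowNegLog (s c u : ℝ) : ℝ :=
  ∫ t in Ioo 0 1, t ^ s * (-log t) ^ c * exp (-(u * t))

lemma integrableOn_rpow_mul_neg_log_rpow_mul_exp (u : ℝ) {s c : ℝ} (hs : -1 < s) (hc : 0 ≤ c) :
    IntegrableOn (fun t ↦ t ^ s * (-log t) ^ c * exp (-(u * t))) (Ioo 0 1) :=
  (integrableOn_rpow_mul_neg_log_rpow hs hc).mul_continuousOn_of_subset (by fun_prop)
    measurableSet_Ioo isCompact_Icc Ioo_subset_Icc_self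

lemma laplaceRpowNegLog_pos (u : ℝ) {s c : ℝ} (hs : -1 < s) (hc : 0 ≤ c) :
    0 < laplaceRpowNegLog s c u := by
  rw [laplaceRpowNegLog, ← integral_Ioc_eq_integral_Ioo,
    ← intervalIntegral.integral_of_le zero_le_one]
  refine intervalIntegral.intervalIntegral_pos_of_pos_on ?_ (fun t ⟨ht₀, ht₁⟩ ↦ ?_) one_pos
  · exact (intervalIntegrable_iff_integrableOn_Ioo_of_le zero_le_one).2
      (integrableOn_rpow_mul_neg_log_rpow_mul_exp u hs hc)
  · have hlog : 0 < -log t := neg_pos.2 (log_neg ht₀ ht₁)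
    positivity

lemma hasDerivAt_rpow_mul_neg_log_rpow_mul_exp (s c u : ℝ) {t : ℝ} (ht₀ : 0 < t) (ht₁ : t < 1) :
    HasDerivAt (fun t ↦ t ^ s * (-log t) ^ c * exp (-(u * t)))
      (s * (t ^ (s - 1) * (-log t) ^ c * exp (-(u * t)))
        - c * (t ^ (s - 1) * (-log t) ^ (c - 1) * exp (-(u * t)))
        - u * (t ^ s * (-log t) ^ c * exp (-(u * t)))) t := by
  have hlog : 0 < -log t := neg_pos.2 (log_neg ht₀ ht₁)
  have h := (((hasDerivAt_rpow_const (p := s) (Or.inl ht₀.ne')).mul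
    (((hasDerivAt_log ht₀.ne').neg).rpow_const (p := c) (Or.inl hlog.ne'))).mul
    (((hasDerivAt_id t).const_mul u).neg.exp))
  refine h.congr_deriv ?_
  simp only [Pi.mul_apply, Pi.neg_apply, id, mul_one]
  rw [rpow_sub_one ht₀.ne']
  field_simp
  ring

lemma mul_laplaceRpowNegLog (u : ℝ) {s c : ℝ} (hs : 0 < s) (hc : 1 ≤ c) :
    u * laplaceRpowNegLog s c u
      = s * laplaceRpowNegLog (s - 1) c u - c * laplaceRpowNegLog (s - 1) (c - 1) u := by
  have hc₀ : 0 ≤ c := by linarith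
  have h₁ := integrableOn_rpow_mul_neg_log_rpow_mul_exp u (s := s - 1) (by linarith) hc₀
  have h₂ := integrableOn_rpow_mul_neg_log_rpow_mul_exp u (s := s - 1) (by linarith)
    (sub_nonneg.2 hc)
  have h₃ := integrableOn_rpow_mul_neg_log_rpow_mul_exp u (s := s) (by linarith) hc₀
  have hlim₀ : Tendsto (fun t ↦ t ^ s * (-log t) ^ c * exp (-(u * t))) (𝓝[>] 0) (𝓝 0) := by
    have hexp : Tendsto (fun t ↦ exp (-(u * t))) (𝓝[>] 0) (𝓝 1) := by
      simpa using ((by fun_prop : Continuous fun t ↦ exp (-(u * t))).tendsto 0).mono_left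
        nhdsWithin_le_nhds
    simpa using (tendsto_rpow_mul_neg_log_rpow_nhdsGT_zero hs hc₀).mul hexp
  have hlim₁ : Tendsto (fun t ↦ t ^ s * (-log t) ^ c * exp (-(u * t))) (𝓝[<] 1) (𝓝 0) := by
    have : ContinuousAt (fun t ↦ t ^ s * (-log t) ^ c * exp (-(u * t))) 1 := by
      fun_prop (disch := simp [hc₀])
    simpa [zero_rpow (by linarith : c ≠ 0)] using this.tendsto.mono_left nhdsWithin_le_nhds
  have hftc := intervalIntegral.integral_eq_sub_of_hasDerivAt_of_tendsto zero_lt_one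
    (fun t ⟨ht₀, ht₁⟩ ↦ hasDerivAt_rpow_mul_neg_log_rpow_mul_exp s c u ht₀ ht₁)
    ((intervalIntegrable_iff_integrableOn_Ioo_of_le zero_le_one).2
      (((h₁.const_mul s).sub (h₂.const_mul c)).sub (h₃.const_mul u))) hlim₀ hlim₁
  rw [intervalIntegral.integral_of_le zero_le_one, integral_Ioc_eq_integral_Ioo,
    integral_sub, integral_sub, integral_const_mul, integral_const_mul, integral_const_mul] at hftc
  · simp only [laplaceRpowNegLog]
    linarith
  exacts [h₁.const_mul s, h₂.const_mul c, (h₁.const_mul s).sub (h₂.const_mul c), h₃.const_mul u]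

lemma sub_mul_laplaceRpowNegLog_div (u : ℝ) {s c : ℝ} (hs : 0 < s) (hc : 1 ≤ c) :
    s - u * (laplaceRpowNegLog s c u / laplaceRpowNegLog (s - 1) c u)
      = c * (laplaceRpowNegLog (s - 1) (c - 1) u / laplaceRpowNegLog (s - 1) c u) := by
  have hpos := laplaceRpowNegLog_pos u (s := s - 1) (c := c) (by linarith) (by linarith)
  field_simp
  linear_combination -mul_laplaceRpowNegLog u hs hc

lemma laplaceRpowNegLog_eq_mul_integral (s c : ℝ) {u : ℝ} (hu : 1 < u) :
    laplaceRpowNegLog s c u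
      = (log u) ^ c / u ^ (s + 1) * ∫ t in Ioo 0 u, t ^ s * (1 - log t / log u) ^ c * exp (-t) := by
  have hu₀ : 0 < u := by linarith
  have hlog : 0 < log u := log_pos hu
  have hscale := intervalIntegral.integral_comp_div
    (fun t ↦ t ^ s * (-log t) ^ c * exp (-(u * t))) (a := 0) (b := u) hu₀.ne'
  rw [zero_div, div_self hu₀.ne', intervalIntegral.integral_of_le hu₀.le,
    integral_Ioc_eq_integral_Ioo, intervalIntegral.integral_of_le zero_le_one,
    integral_Ioc_eq_integral_Ioo, smul_eq_mul] at hscale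
  have hpoint : ∀ t ∈ Ioo 0 u, (t / u) ^ s * (-log (t / u)) ^ c * exp (-(u * (t / u)))
      = (log u) ^ c / u ^ s * (t ^ s * (1 - log t / log u) ^ c * exp (-t)) := by
    rintro t ⟨ht₀, htu⟩
    have hratio : 0 ≤ 1 - log t / log u := by
      rw [sub_nonneg, div_le_one hlog]
      exact log_le_log ht₀ htu.le
    have hneg : -log (t / u) = log u * (1 - log t / log u) := by
      rw [log_div ht₀.ne' hu₀.ne']
      field_simp
      ring
    rw [div_rpow ht₀.le hu₀.le, hneg, mul_rpow hlog.le hratio, mul_div_cancel₀ t hu₀.ne']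
    ring
  rw [setIntegral_congr_fun measurableSet_Ioo hpoint, integral_const_mul] at hscale
  rw [laplaceRpowNegLog, rpow_add_one hu₀.ne', ← div_div, div_mul_eq_mul_div, hscale,
    mul_div_cancel_left₀ _ hu₀.ne']

lemma rpow_mul_one_sub_log_div_rpow_le {s c ε L t : ℝ} (hc : 0 ≤ c) (hε : 0 < ε) (hL : 1 ≤ L)
    (ht : 0 < t) (htL : log t ≤ L) :
    t ^ s * (1 - log t / L) ^ c ≤ (1 + ε⁻¹) ^ c * t ^ (s - ε * c) + t ^ s := by
  have hratio : 0 ≤ 1 - log t / L := by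
    rw [sub_nonneg, div_le_one (by linarith)]
    exact htL
  rcases le_total t 1 with ht₁ | ht₁
  · have hlog : 0 ≤ -log t := neg_nonneg.2 (log_nonpos ht.le ht₁)
    have hpow : 1 ≤ t ^ (-ε) := one_le_rpow_of_pos_of_le_one_of_nonpos ht ht₁ (by linarith)
    have hle : 1 - log t / L ≤ (1 + ε⁻¹) * t ^ (-ε) := by
      have h₁ : -log t / L ≤ -log t := div_le_self hlog hL
      have h₂ := neg_log_le_inv_mul_rpow_neg ht hε
      have h₃ : 0 ≤ ε⁻¹ := by positivity
      rw [neg_div] at h₁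
      nlinarith
    have := rpow_mul_rpow_le_of_le_mul_rpow_neg (s := s) hc ht (by positivity) hratio hle
    have : 0 ≤ t ^ s := by positivity
    linarith
  · have hlog : 0 ≤ log t / L := div_nonneg (log_nonneg ht₁) (by linarith)
    have hle : (1 - log t / L) ^ c ≤ 1 := rpow_le_one hratio (by linarith) hc
    have : t ^ s * (1 - log t / L) ^ c ≤ t ^ s := mul_le_of_le_one_right (by positivity) hle
    have : 0 ≤ (1 + ε⁻¹) ^ c * t ^ (s - ε * c) := by positivity
    linarith

lemma integrableOn_rpow_mul_exp_neg {r : ℝ} (hr : -1 < r) :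
    IntegrableOn (fun t ↦ t ^ r * exp (-t)) (Ioi 0) := by
  simpa [mul_comm] using GammaIntegral_convergent (s := r + 1) (by linarith)

lemma tendsto_integral_rpow_mul_one_sub_log_div_rpow_mul_exp {s c : ℝ} (hs : -1 < s) (hc : 0 ≤ c) :
    Tendsto (fun u ↦ ∫ t in Ioo 0 u, t ^ s * (1 - log t / log u) ^ c * exp (-t)) atTop
      (𝓝 (Gamma (s + 1))) := by
  obtain ⟨ε, hε, hsε⟩ := exists_pos_lt_sub_mul hs hc
  have hGamma : Gamma (s + 1) = ∫ t in Ioi 0, t ^ s * exp (-t) := by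
    rw [Gamma_eq_integral (by linarith), add_sub_cancel_right]
    simp only [mul_comm]
  have hindicator : ∀ u, ∫ t in Ioo 0 u, t ^ s * (1 - log t / log u) ^ c * exp (-t)
      = ∫ t in Ioi 0, (Ioo 0 u).indicator (fun t ↦ t ^ s * (1 - log t / log u) ^ c * exp (-t)) t :=
    fun u ↦ by rw [setIntegral_indicator measurableSet_Ioo,
      inter_eq_self_of_subset_right Ioo_subset_Ioi_self]
  simp only [hindicator, hGamma]
  refine tendsto_integral_filter_of_dominated_convergence
    (fun t ↦ (1 + ε⁻¹) ^ c * (t ^ (s - ε * c) * exp (-t)) + t ^ s * exp (-t)) ?_ ?_ ?_ ?_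
  · exact Eventually.of_forall fun u ↦
      ((Measurable.indicator (by fun_prop) measurableSet_Ioo).aestronglyMeasurable)
  · filter_upwards [eventually_ge_atTop (exp 1)] with u hu
    have hlog : 1 ≤ log u := (le_log_iff_exp_le ((exp_pos 1).trans_le hu)).2 hu
    filter_upwards [ae_restrict_mem measurableSet_Ioi] with t (ht : 0 < t)
    by_cases htu : t ∈ Ioo 0 u
    · have hratio : 0 ≤ 1 - log t / log u := by
        rw [sub_nonneg, div_le_one (by linarith)]
        exact log_le_log ht htu.2.le
      rw [indicator_of_mem htu, norm_of_nonneg (by positivity)]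
      calc t ^ s * (1 - log t / log u) ^ c * exp (-t)
          ≤ ((1 + ε⁻¹) ^ c * t ^ (s - ε * c) + t ^ s) * exp (-t) :=
            mul_le_mul_of_nonneg_right (rpow_mul_one_sub_log_div_rpow_le hc hε hlog ht
              (log_le_log ht htu.2.le)) (exp_nonneg _)
        _ = _ := by ring
    · rw [indicator_of_notMem htu, norm_zero]
      positivity
  · exact ((integrableOn_rpow_mul_exp_neg hsε).const_mul _).add (integrableOn_rpow_mul_exp_neg hs)
  · filter_upwards [ae_restrict_mem measurableSet_Ioi] with t (ht : 0 < t)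
    have hlim : Tendsto (fun u ↦ t ^ s * (1 - log t / log u) ^ c * exp (-t)) atTop
        (𝓝 (t ^ s * exp (-t))) := by
      have hratio : Tendsto (fun u ↦ 1 - log t / log u) atTop (𝓝 1) := by
        simpa using tendsto_const_nhds.sub (tendsto_const_nhds.div_atTop tendsto_log_atTop)
      simpa using ((hratio.rpow_const (Or.inl one_ne_zero)).const_mul (t ^ s)).mul_const (exp (-t))
    refine hlim.congr' ?_
    filter_upwards [eventually_gt_atTop t] with u hu
    rw [indicator_of_mem (show t ∈ Ioo 0 u from ⟨ht, hu⟩)]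

lemma tendsto_laplaceRpowNegLog {s c : ℝ} (hs : -1 < s) (hc : 0 ≤ c) :
    Tendsto (fun u ↦ u ^ (s + 1) / (log u) ^ c * laplaceRpowNegLog s c u) atTop
      (𝓝 (Gamma (s + 1))) := by
  refine (tendsto_integral_rpow_mul_one_sub_log_div_rpow_mul_exp hs hc).congr' ?_
  filter_upwards [eventually_gt_atTop 1] with u hu
  have hu₀ : 0 < u ^ (s + 1) := rpow_pos_of_pos (by linarith) _
  have hlog : 0 < (log u) ^ c := rpow_pos_of_pos (log_pos hu) _
  rw [laplaceRpowNegLog_eq_mul_integral s c hu, ← mul_assoc, div_mul_div_comm, mul_comm (u ^ _),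
    div_self (by positivity), one_mul]

lemma tendsto_log_mul_laplaceRpowNegLog_div {s c : ℝ} (hs : -1 < s) (hc : 1 ≤ c) :
    Tendsto (fun u ↦ log u * (laplaceRpowNegLog s (c - 1) u / laplaceRpowNegLog s c u)) atTop
      (𝓝 1) := by
  have hGamma : Gamma (s + 1) ≠ 0 := (Gamma_pos_of_pos (by linarith)).ne'
  have h := (tendsto_laplaceRpowNegLog hs (sub_nonneg.2 hc)).div
    (tendsto_laplaceRpowNegLog hs (by linarith)) hGamma
  rw [div_self hGamma] at h
  refine h.congr' ?_
  filter_upwards [eventually_gt_atTop 1] with u hu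
  have hlog : 0 < log u := log_pos hu
  rw [Pi.div_apply, mul_div_mul_comm,
    div_div_div_cancel_left' _ _ (rpow_pos_of_pos (by linarith) _).ne', ← rpow_sub hlog,
    sub_sub_cancel, rpow_one]

lemma tendsto_log_const_mul_mul_of_tendsto_log_mul {g : ℝ → ℝ} {k L : ℝ} (hk : 0 < k)
    (h : Tendsto (fun u ↦ log u * g u) atTop (𝓝 L)) :
    Tendsto (fun u ↦ log (k * u) * g u) atTop (𝓝 L) := by
  have hg : Tendsto g atTop (𝓝 0) := by
    refine (h.div_atTop tendsto_log_atTop).congr' ?_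
    filter_upwards [eventually_gt_atTop 1] with u hu
    rw [mul_div_cancel_left₀ _ (log_pos hu).ne']
  have h' := h.add (hg.const_mul (log k))
  rw [mul_zero, add_zero] at h'
  refine h'.congr' ?_
  filter_upwards [eventually_gt_atTop 0] with u hu
  rw [log_mul hk.ne' hu.ne']
  ring

/-- For the known-variance generalized Bayes shrinkage function
ψ(v) = v·[∫₀¹ λ^{p/2−1}(log(1/λ))^b e^{−vλ/2} dλ]/[∫₀¹ λ^{p/2−2}(log(1/λ))^b e^{−vλ/2} dλ],
with p ≥ 3 and b ≥ 1, one has lim_{v→∞} (log v)(p − 2 − ψ(v)) = 2b. -/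
theorem stmt4 (p : ℝ) (hp : 3 ≤ p) (b : ℝ) (hb : 1 ≤ b)
    (ψ : ℝ → ℝ)
    (hψ : ∀ v > (0 : ℝ), ψ v = v *
      ((∫ l in Set.Ioo (0 : ℝ) 1,
          l ^ (p / 2 - 1) * Real.log (1 / l) ^ b * Real.exp (-v * l / 2)) /
        (∫ l in Set.Ioo (0 : ℝ) 1,
          l ^ (p / 2 - 2) * Real.log (1 / l) ^ b * Real.exp (-v * l / 2)))) :
    Tendsto (fun v : ℝ => Real.log v * (p - 2 - ψ v)) atTop (nhds (2 * b)) := by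
  have hpa : 0 < p / 2 - 1 := by linarith
  have hintegral : ∀ s v : ℝ, ∫ l in Ioo 0 1, l ^ s * log (1 / l) ^ b * exp (-v * l / 2)
      = laplaceRpowNegLog s b (v / 2) := fun s v ↦
    setIntegral_congr_fun measurableSet_Ioo fun l _ ↦ by
      rw [one_div, log_inv, show -v * l / 2 = -(v / 2 * l) by ring]
  have hψ' : ∀ v > 0, log v * (p - 2 - ψ v) = 2 * b * (log (2 * (v / 2)) *
      (laplaceRpowNegLog (p / 2 - 1 - 1) (b - 1) (v / 2)
        / laplaceRpowNegLog (p / 2 - 1 - 1) b (v / 2))) := fun v hv ↦ by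
    rw [hψ v hv, hintegral, hintegral, show p / 2 - 2 = p / 2 - 1 - 1 by ring,
      mul_div_cancel₀ v two_ne_zero]
    linear_combination (2 * log v) * sub_mul_laplaceRpowNegLog_div (v / 2) hpa hb
  have hlim := ((tendsto_log_const_mul_mul_of_tendsto_log_mul two_pos
    (tendsto_log_mul_laplaceRpowNegLog_div (s := p / 2 - 1 - 1) (by linarith) hb)).comp
      (tendsto_id.atTop_div_const two_pos)).const_mul (2 * b)
  rw [mul_one] at hlim
  refine hlim.congr' ?_
  filter_upwards [eventually_gt_atTop 0] with v hv
  exact (hψ' v hv).symm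
end

section
/- For p ≥ 3, n ≥ 3 and b > 0, the function φ(w) = w · [∫₀¹ λ^{p/2−1}(log(1/λ))^b (1+wλ)^{−(p+n)/2−1} dλ] / [∫₀¹ λ^{p/2−2}(log(1/λ))^b (1+wλ)^{−(p+n)/2−1} dλ] admits the exact identity φ(w) = (p−2)/(n+2) − (2b/(n+2)) · [∫₀¹ λ^{p/2−2}(log(1/λ))^{b−1}(1+wλ)^{−(p+n)/2} dλ] / [∫₀¹ λ^{p/2−2}(log(1/λ))^b (1+wλ)^{−(p+n)/2−1} dλ] for every w > 0. -/
open MeasureTheory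

/-!
Let `F(λ) = λ^(p/2-1) (log 1/λ)^b (1+wλ)^(-(p+n)/2)`. Its derivative is
`(p/2-1) B(λ) - ((n+2)/2) w A(λ) - b C(λ)`, where `A`, `B`, `C` are the integrands of the
numerator, the denominator and the remaining integral, and `F` tends to `0` at both ends of
`(0,1)`. Hence `(p/2-1) ∫B - ((n+2)/2) w ∫A = b ∫C`, and dividing by `∫B > 0` gives the
identity. All integrals converge because `λ = e^(-u)` turns `∫₀¹ λ^s (log 1/λ)^t dλ` into a
Gamma integral.
-/

open Set Filter Topology Real

theorem image_exp_neg_Ioi_zero : (fun u : ℝ => exp (-u)) '' Ioi 0 = Ioo 0 1 := by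
  ext x
  constructor
  · rintro ⟨u, hu, rfl⟩
    exact ⟨exp_pos _, exp_lt_one_iff.2 (neg_neg_of_pos hu)⟩
  · rintro ⟨hx0, hx1⟩
    exact ⟨-log x, neg_pos.2 (log_neg hx0 hx1), by simp [exp_log hx0]⟩

theorem integrableOn_rpow_mul_log_one_div_rpow {s t : ℝ} (hs : -1 < s) (ht : -1 < t) :
    IntegrableOn (fun l : ℝ => l ^ s * log (1 / l) ^ t) (Ioo 0 1) := by
  rw [← image_exp_neg_Ioi_zero, integrableOn_image_iff_integrableOn_abs_deriv_smul
    measurableSet_Ioi (fun u _ => ((hasDerivAt_neg u).exp).hasDerivWithinAt)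
    (exp_injective.comp neg_injective).injOn]
  refine (integrableOn_rpow_mul_exp_neg_mul_rpow ht one_pos (neg_lt_iff_pos_add'.1 hs)).congr_fun
    (fun u _ => ?_) measurableSet_Ioi
  rw [smul_eq_mul, abs_of_neg (by simpa using exp_pos (-u)), one_div, ← exp_neg, neg_neg, log_exp,
    ← exp_mul]
  simp only [rpow_one, mul_neg, mul_one, neg_neg, ← mul_assoc, ← exp_add]
  ring_nf

theorem integral_Ioo_eq_sub_of_hasDerivAt_of_tendsto {E : Type*} [NormedAddCommGroup E]
    [NormedSpace ℝ E] [CompleteSpace E] {f f' : ℝ → E} {a b : ℝ} {fa fb : E} (hab : a < b)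
    (hderiv : ∀ x ∈ Ioo a b, HasDerivAt f (f' x) x) (hint : IntegrableOn f' (Ioo a b))
    (ha : Tendsto f (𝓝[>] a) (𝓝 fa)) (hb : Tendsto f (𝓝[<] b) (𝓝 fb)) :
    ∫ x in Ioo a b, f' x = fb - fa := by
  rw [← integral_Ioc_eq_integral_Ioo, ← intervalIntegral.integral_of_le hab.le]
  exact intervalIntegral.integral_eq_sub_of_hasDerivAt_of_tendsto hab hderiv
    ((intervalIntegrable_iff_integrableOn_Ioo_of_le hab.le).2 hint) ha hb

noncomputable def logBetaKernel (s t e w l : ℝ) : ℝ :=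
  l ^ s * log (1 / l) ^ t * (1 + w * l) ^ e

noncomputable def logBetaIntegral (s t e w : ℝ) : ℝ :=
  ∫ l in Ioo (0 : ℝ) 1, logBetaKernel s t e w l

section LogBetaKernel

variable {s t e w : ℝ}

theorem logBetaKernel_pos (hw : 0 ≤ w) {l : ℝ} (hl : l ∈ Ioo 0 1) :
    0 < logBetaKernel s t e w l := by
  obtain ⟨hl0, hl1⟩ := hl
  have hL := log_pos (one_lt_one_div hl0 hl1)
  unfold logBetaKernel
  positivity

theorem integrableOn_logBetaKernel (hs : -1 < s) (ht : -1 < t) (he : e ≤ 0) (hw : 0 ≤ w) :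
    IntegrableOn (logBetaKernel s t e w) (Ioo 0 1) := by
  refine (integrableOn_rpow_mul_log_one_div_rpow hs ht).mul_bdd (c := 1)
    (by fun_prop : Measurable fun l : ℝ => (1 + w * l) ^ e).aestronglyMeasurable ?_
  refine (ae_restrict_iff' measurableSet_Ioo).2 (ae_of_all _ fun l hl => ?_)
  have hP : 1 ≤ 1 + w * l := le_add_of_nonneg_right (mul_nonneg hw hl.1.le)
  rw [norm_of_nonneg (rpow_nonneg (by linarith) e)]
  exact rpow_le_one_of_one_le_of_nonpos hP he

theorem hasDerivAt_logBetaKernel (hw : 0 ≤ w) {l : ℝ} (hl : l ∈ Ioo 0 1) :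
    HasDerivAt (logBetaKernel s t e w)
      (s * logBetaKernel (s - 1) t (e - 1) w l + (s + e) * w * logBetaKernel s t (e - 1) w l -
        t * logBetaKernel (s - 1) (t - 1) e w l) l := by
  obtain ⟨hl0, hl1⟩ := hl
  have hL : 0 < log (1 / l) := log_pos (one_lt_one_div hl0 hl1)
  have hP : 0 < 1 + w * l := by positivity
  have hlog : HasDerivAt (fun x => log (1 / x)) (-(l ^ 2)⁻¹ / l⁻¹) l := by
    simpa only [one_div] using (hasDerivAt_inv hl0.ne').log (inv_ne_zero hl0.ne')
  have hpoly : HasDerivAt (fun x => 1 + w * x) w l := by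
    simpa using ((hasDerivAt_id l).const_mul w).const_add 1
  refine (((hasDerivAt_rpow_const (Or.inl hl0.ne')).mul (hlog.rpow_const (Or.inl hL.ne'))).mul
    (hpoly.rpow_const (Or.inl hP.ne'))).congr_deriv ?_
  simp only [logBetaKernel, Pi.mul_apply]
  rw [rpow_sub_one hl0.ne', rpow_sub_one hL.ne', rpow_sub_one hP.ne']
  field_simp
  ring

theorem tendsto_logBetaKernel_nhdsGT_zero (hs : 0 < s) (ht : 0 < t) :
    Tendsto (logBetaKernel s t e w) (𝓝[>] 0) (𝓝 0) := by
  have hlog : Tendsto (fun l : ℝ => -(log l * l ^ (s / t))) (𝓝[>] 0) (𝓝 0) := by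
    simpa using (tendsto_log_mul_rpow_nhdsGT_zero (div_pos hs ht)).neg
  have hpow := (continuousAt_rpow_const 0 t (Or.inr ht.le)).tendsto.comp hlog
  rw [zero_rpow ht.ne'] at hpow
  have hpoly : ContinuousAt (fun l : ℝ => (1 + w * l) ^ e) 0 := by
    fun_prop (disch := simp)
  have h := hpow.mul (hpoly.tendsto.mono_left nhdsWithin_le_nhds)
  rw [zero_mul] at h
  refine h.congr' ?_
  filter_upwards [Ioo_mem_nhdsGT one_pos] with l ⟨hl0, hl1⟩
  rw [Function.comp_apply, logBetaKernel, one_div, log_inv, ← neg_mul,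
    mul_rpow (neg_nonneg.2 (log_nonpos hl0.le hl1.le)) (rpow_nonneg hl0.le _), ← rpow_mul hl0.le,
    div_mul_cancel₀ _ ht.ne', mul_comm (_ ^ t)]

theorem tendsto_logBetaKernel_nhdsLT_one (ht : 0 < t) (hw : 0 ≤ w) :
    Tendsto (logBetaKernel s t e w) (𝓝[<] 1) (𝓝 0) := by
  have : ContinuousAt (logBetaKernel s t e w) 1 := by
    unfold logBetaKernel
    fun_prop (disch := first | exact Or.inr ht.le | exact Or.inl (by positivity) | positivity)
  simpa [logBetaKernel, zero_rpow ht.ne'] using this.tendsto.mono_left nhdsWithin_le_nhds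

theorem logBetaIntegral_pos (hs : -1 < s) (ht : -1 < t) (he : e ≤ 0) (hw : 0 ≤ w) :
    0 < logBetaIntegral s t e w := by
  refine (setIntegral_pos_iff_support_of_nonneg_ae
    ((ae_restrict_iff' measurableSet_Ioo).2 (ae_of_all _ fun l hl => (logBetaKernel_pos hw hl).le))
    (integrableOn_logBetaKernel hs ht he hw)).2 ?_
  rw [inter_eq_right.2 fun l hl => Function.mem_support.2 (logBetaKernel_pos hw hl).ne',
    volume_Ioo]
  norm_num

theorem logBetaIntegral_integration_by_parts (hs : 0 < s) (ht : 0 < t) (he : e ≤ 0)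
    (hw : 0 ≤ w) :
    s * logBetaIntegral (s - 1) t (e - 1) w + (s + e) * w * logBetaIntegral s t (e - 1) w =
      t * logBetaIntegral (s - 1) (t - 1) e w := by
  have hA := integrableOn_logBetaKernel (s := s) (t := t) (e := e - 1)
    (by linarith) (by linarith) (by linarith) hw
  have hB := integrableOn_logBetaKernel (s := s - 1) (t := t) (e := e - 1)
    (by linarith) (by linarith) (by linarith) hw
  have hC := integrableOn_logBetaKernel (s := s - 1) (t := t - 1)
    (by linarith) (by linarith) he hw
  have h := integral_Ioo_eq_sub_of_hasDerivAt_of_tendsto one_pos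
    (fun l hl => hasDerivAt_logBetaKernel hw hl)
    (((hB.const_mul s).add (hA.const_mul _)).sub (hC.const_mul t))
    (tendsto_logBetaKernel_nhdsGT_zero hs ht) (tendsto_logBetaKernel_nhdsLT_one ht hw)
  rw [integral_sub, integral_add, integral_const_mul, integral_const_mul, integral_const_mul,
    sub_zero, sub_eq_zero] at h
  exacts [h, hB.const_mul s, hA.const_mul _, (hB.const_mul s).add (hA.const_mul _), hC.const_mul t]

end LogBetaKernel

/-- Exact integration-by-parts identity for the unknown-variance generalized Bayes
shrinkage function φ(w), for every w > 0 (p ≥ 3, n ≥ 3, b > 0). -/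
theorem stmt5 (p n : ℝ) (hp : 3 ≤ p) (hn : 3 ≤ n) (b : ℝ) (hb : 0 < b)
    (w : ℝ) (hw : 0 < w) :
    w * ((∫ l in Set.Ioo (0 : ℝ) 1,
          l ^ (p / 2 - 1) * Real.log (1 / l) ^ b * (1 + w * l) ^ (-(p + n) / 2 - 1)) /
        (∫ l in Set.Ioo (0 : ℝ) 1,
          l ^ (p / 2 - 2) * Real.log (1 / l) ^ b * (1 + w * l) ^ (-(p + n) / 2 - 1))) =
      (p - 2) / (n + 2) - (2 * b / (n + 2)) *
        ((∫ l in Set.Ioo (0 : ℝ) 1,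
            l ^ (p / 2 - 2) * Real.log (1 / l) ^ (b - 1) * (1 + w * l) ^ (-(p + n) / 2)) /
          (∫ l in Set.Ioo (0 : ℝ) 1,
            l ^ (p / 2 - 2) * Real.log (1 / l) ^ b * (1 + w * l) ^ (-(p + n) / 2 - 1))) := by
  change w * (logBetaIntegral _ _ _ w / logBetaIntegral _ _ _ w) =
    _ - _ * (logBetaIntegral _ _ _ w / logBetaIntegral _ _ _ w)
  have hB : 0 < logBetaIntegral (p / 2 - 2) b (-(p + n) / 2 - 1) w :=
    logBetaIntegral_pos (by linarith) (by linarith) (by linarith) hw.le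
  have hibp := logBetaIntegral_integration_by_parts (s := p / 2 - 1) (e := -(p + n) / 2)
    (by linarith) hb (by linarith) hw.le
  rw [show p / 2 - 1 - 1 = p / 2 - 2 by ring] at hibp
  generalize logBetaIntegral (p / 2 - 1) b (-(p + n) / 2 - 1) w = A at hibp ⊢
  generalize logBetaIntegral (p / 2 - 2) b (-(p + n) / 2 - 1) w = B at hB hibp ⊢
  generalize logBetaIntegral (p / 2 - 2) (b - 1) (-(p + n) / 2) w = C at hibp ⊢
  have hn2 : n + 2 ≠ 0 := by linarith
  field_simp
  linear_combination (-2) * hibp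
end

section
/- For p ≥ 3, n ≥ 3 and b ≥ 1, lim_{w→∞} (log w) · [∫₀¹ λ^{p/2−2}(log(1/λ))^{b−1}(1+wλ)^{−(p+n)/2} dλ] / [∫₀¹ λ^{p/2−2}(log(1/λ))^b (1+wλ)^{−(p+n)/2−1} dλ] = (p+n)/(n+2). -/
open MeasureTheory Filter Set Real Topology

/-!
Write `I(a, s) = ∫₀^∞ t^a (1 + t)^(-s) dt`. The substitution `t = w λ` turns
`(log w)^(-c) w^(a+1) ∫₀¹ λ^a (log (1/λ))^c (1 + w λ)^(-s) dλ` into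
`∫₀^w t^a (1 - log t / log w)^c (1 + t)^(-s) dt`, which tends to `I(a, s)` by dominated
convergence: for `log w ≥ 1` the logarithmic factor is at most `C t^(-δ) + 1` with `δ < a + 1`.
Hence the quotient in the theorem behaves like `log w · I(a, s) / I(a, s + 1)` with
`a = p/2 - 2`, `s = (p + n)/2`, and integrating `t^(a+1) (1 + t)^(-s)` by parts gives
`s I(a, s + 1) = (s - a - 1) I(a, s)`, so the limit is `s / (s - a - 1) = (p + n)/(n + 2)`.
-/

section PowerIntegral

variable {a s : ℝ}

lemma rpow_mul_one_add_rpow_neg_le_rpow_sub {t : ℝ} (ht : 0 < t) (hs : 0 ≤ s) :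
    t ^ a * (1 + t) ^ (-s) ≤ t ^ (a - s) := by
  rw [sub_eq_add_neg, rpow_add ht]
  exact mul_le_mul_of_nonneg_left (rpow_le_rpow_of_nonpos ht (by linarith) (neg_nonpos.mpr hs))
    (rpow_nonneg ht.le a)

lemma integrableOn_rpow_mul_one_add_rpow_neg (ha : -1 < a) (hs : a + 1 < s) :
    IntegrableOn (fun t : ℝ => t ^ a * (1 + t) ^ (-s)) (Ioi 0) := by
  have hmeas : AEStronglyMeasurable (fun t : ℝ => t ^ a * (1 + t) ^ (-s)) := by fun_prop
  have hnorm : ∀ t ∈ Ioi (0 : ℝ), ‖t ^ a * (1 + t) ^ (-s)‖ = t ^ a * (1 + t) ^ (-s) :=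
    fun t (ht : 0 < t) => norm_of_nonneg (by positivity)
  rw [← Ioc_union_Ioi_eq_Ioi zero_le_one]
  refine IntegrableOn.union ?_ ?_
  · have hpow : IntegrableOn (fun t : ℝ => t ^ a) (Ioc 0 1) :=
      (intervalIntegrable_iff_integrableOn_Ioc_of_le zero_le_one).mp
        (intervalIntegral.intervalIntegrable_rpow' ha)
    refine hpow.mono' hmeas.restrict (ae_restrict_of_forall_mem measurableSet_Ioc fun t ht => ?_)
    rw [hnorm t ht.1]
    have h1t : 1 ≤ 1 + t := by linarith [ht.1]
    exact mul_le_of_le_one_right (rpow_nonneg ht.1.le a)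
      (rpow_le_one_of_one_le_of_nonpos h1t (by linarith))
  · refine (integrableOn_Ioi_rpow_of_lt (a := a - s) (by linarith) zero_lt_one).mono'
      hmeas.restrict (ae_restrict_of_forall_mem measurableSet_Ioi fun t ht => ?_)
    have ht0 : (0 : ℝ) < t := zero_lt_one.trans ht
    rw [hnorm t ht0]
    exact rpow_mul_one_add_rpow_neg_le_rpow_sub ht0 (by linarith)

lemma integral_rpow_mul_one_add_rpow_neg_pos (ha : -1 < a) (hs : a + 1 < s) :
    0 < ∫ t in Ioi (0 : ℝ), t ^ a * (1 + t) ^ (-s) := by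
  have hpos : ∀ t ∈ Ioi (0 : ℝ), 0 < t ^ a * (1 + t) ^ (-s) := fun t (ht : 0 < t) => by
    positivity
  rw [setIntegral_pos_iff_support_of_nonneg_ae
    (ae_restrict_of_forall_mem measurableSet_Ioi fun t ht => (hpos t ht).le)
    (integrableOn_rpow_mul_one_add_rpow_neg ha hs)]
  calc (0 : ENNReal) < volume (Ioi (0 : ℝ)) := by simp
    _ ≤ _ := measure_mono fun t ht => by exact ⟨(hpos t ht).ne', ht⟩

lemma integral_rpow_mul_one_add_rpow_neg_succ (ha : -1 < a) (hs : a + 1 < s) :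
    s * ∫ t in Ioi (0 : ℝ), t ^ a * (1 + t) ^ (-(s + 1))
      = (s - a - 1) * ∫ t in Ioi (0 : ℝ), t ^ a * (1 + t) ^ (-s) := by
  set f : ℝ → ℝ := fun t => t ^ (a + 1) * (1 + t) ^ (-s)
  have hI := integrableOn_rpow_mul_one_add_rpow_neg ha hs
  have hI' := integrableOn_rpow_mul_one_add_rpow_neg (s := s + 1) ha (by linarith)
  have hderiv : ∀ t ∈ Ioi (0 : ℝ), HasDerivAt f
      ((a + 1 - s) * (t ^ a * (1 + t) ^ (-s)) + s * (t ^ a * (1 + t) ^ (-(s + 1)))) t := by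
    intro t (ht : 0 < t)
    have h1t : 0 < 1 + t := by linarith
    refine ((hasDerivAt_rpow_const (p := a + 1) (Or.inl ht.ne')).mul
      (((hasDerivAt_id t).const_add 1).rpow_const (p := -s) (Or.inl h1t.ne'))).congr_deriv ?_
    have hsplit : (1 + t) ^ (-s) = (1 + t) ^ (-s - 1) * (1 + t) := by
      rw [← rpow_add_one h1t.ne', sub_add_cancel]
    simp only [id]
    rw [add_sub_cancel_right, rpow_add_one ht.ne', show -(s + 1) = -s - 1 by ring, hsplit]
    ring
  have hcont : ContinuousWithinAt f (Ici 0) 0 := by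
    refine ContinuousAt.continuousWithinAt ?_
    exact (continuousAt_rpow_const 0 (a + 1) (Or.inr (by linarith))).mul
      ((continuous_const.add continuous_id).continuousAt.rpow_const (Or.inl (by norm_num)))
  have htop : Tendsto f atTop (𝓝 0) := by
    refine tendsto_of_tendsto_of_tendsto_of_le_of_le' tendsto_const_nhds
      (tendsto_rpow_neg_atTop (y := s - (a + 1)) (by linarith)) ?_ ?_
    · filter_upwards [eventually_gt_atTop 0] with t ht
      positivity
    · filter_upwards [eventually_gt_atTop 0] with t ht
      simpa using rpow_mul_one_add_rpow_neg_le_rpow_sub (a := a + 1) ht (by linarith)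
  have hibp := integral_Ioi_of_hasDerivAt_of_tendsto hcont hderiv
    ((hI.const_mul _).add (hI'.const_mul _)) htop
  have hf0 : f 0 = 0 := by simp [f, zero_rpow (show a + 1 ≠ 0 by linarith)]
  rw [hf0, sub_zero, integral_add (hI.const_mul _) (hI'.const_mul _), integral_const_mul,
    integral_const_mul] at hibp
  linarith

lemma integral_rpow_mul_one_add_rpow_neg_div_succ (ha : -1 < a) (hs : a + 1 < s) :
    (∫ t in Ioi (0 : ℝ), t ^ a * (1 + t) ^ (-s)) /
        (∫ t in Ioi (0 : ℝ), t ^ a * (1 + t) ^ (-(s + 1))) = s / (s - a - 1) := by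
  rw [div_eq_div_iff (integral_rpow_mul_one_add_rpow_neg_pos ha (by linarith)).ne'
    (by linarith), mul_comm, integral_rpow_mul_one_add_rpow_neg_succ ha hs]

end PowerIntegral

section LogRescaling

variable {a c s : ℝ}

/-- The integrand after the substitution `t = w λ`; the indicator records `λ < 1`. -/
noncomputable def rescaledIntegrand (a c s w : ℝ) : ℝ → ℝ :=
  indicator (Ioo 0 w) fun t => t ^ a * ((log w - log t) / log w) ^ c * (1 + t) ^ (-s)

lemma log_rpow_neg_mul_rpow_mul_integral_eq {w : ℝ} (hw : 1 < w) :
    log w ^ (-c) * w ^ (a + 1) *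
        ∫ l in Ioo (0 : ℝ) 1, l ^ a * log (1 / l) ^ c * (1 + w * l) ^ (-s)
      = ∫ t in Ioi 0, rescaledIntegrand a c s w t := by
  have hw0 : 0 < w := by linarith
  have hlog : 0 < log w := log_pos hw
  set g : ℝ → ℝ := fun t => t ^ a * ((log w - log t) / log w) ^ c * (1 + t) ^ (-s)
  have hg : ∀ l ∈ Ioo (0 : ℝ) 1, g (w * l)
      = w ^ a * log w ^ (-c) * (l ^ a * log (1 / l) ^ c * (1 + w * l) ^ (-s)) := by
    intro l ⟨hl0, hl1⟩
    have hlogl : log w - log (w * l) = log (1 / l) := by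
      rw [log_mul hw0.ne' hl0.ne', one_div, log_inv]
      ring
    simp only [g]
    rw [mul_rpow hw0.le hl0.le, hlogl,
      div_rpow (log_nonneg (one_le_one_div hl0 hl1.le)) hlog.le, rpow_neg hlog.le]
    ring
  calc _ = w * ∫ l in Ioo (0 : ℝ) 1, g (w * l) := by
        rw [setIntegral_congr_fun measurableSet_Ioo hg, integral_const_mul,
          rpow_add_one hw0.ne']
        ring
    _ = ∫ t in Ioo 0 w, g t := by
        rw [← integral_Ioc_eq_integral_Ioo, ← integral_Ioc_eq_integral_Ioo,
          ← intervalIntegral.integral_of_le zero_le_one,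
          ← intervalIntegral.integral_of_le hw0.le,
          ← smul_eq_mul, intervalIntegral.smul_integral_comp_mul_left, mul_zero, mul_one]
    _ = _ := by
        rw [rescaledIntegrand, setIntegral_indicator measurableSet_Ioo,
          inter_eq_right.mpr Ioo_subset_Ioi_self]

lemma tendsto_rescaledIntegrand {t : ℝ} (ht : 0 < t) :
    Tendsto (fun w => rescaledIntegrand a c s w t) atTop (𝓝 (t ^ a * (1 + t) ^ (-s))) := by
  have hratio : Tendsto (fun w => (log w - log t) / log w) atTop (𝓝 1) := by
    have h := (tendsto_const_nhds (x := (1 : ℝ))).sub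
      ((tendsto_const_nhds (x := log t)).div_atTop tendsto_log_atTop)
    rw [sub_zero] at h
    refine h.congr' ?_
    filter_upwards [eventually_gt_atTop 1] with w hw
    field_simp [(log_pos hw).ne']
  have hlim := ((tendsto_const_nhds (x := t ^ a)).mul
    (hratio.rpow_const (p := c) (Or.inl one_ne_zero))).mul
    (tendsto_const_nhds (x := (1 + t) ^ (-s)))
  rw [one_rpow, mul_one] at hlim
  refine hlim.congr' ?_
  filter_upwards [eventually_gt_atTop t] with w hw
  rw [rescaledIntegrand, indicator_of_mem (show t ∈ Ioo 0 w from ⟨ht, hw⟩)]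

lemma one_add_log_inv_rpow_le {ε t : ℝ} (hc : 0 ≤ c) (hε : 0 < ε) (ht0 : 0 < t)
    (ht1 : t ≤ 1) :
    (1 + log t⁻¹) ^ c ≤ (1 + 1 / ε) ^ c * t ^ (-(ε * c)) := by
  have hlog : log t⁻¹ ≤ t ^ (-ε) / ε := by
    simpa [inv_rpow ht0.le, ← rpow_neg ht0.le] using log_le_rpow_div (inv_nonneg.mpr ht0.le) hε
  have hone : 1 ≤ t ^ (-ε) := one_le_rpow_of_pos_of_le_one_of_nonpos ht0 ht1 (by linarith)
  calc (1 + log t⁻¹) ^ c ≤ ((1 + 1 / ε) * t ^ (-ε)) ^ c := by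
        refine rpow_le_rpow (add_nonneg zero_le_one
          (log_nonneg (one_le_inv_iff₀.mpr ⟨ht0, ht1⟩))) ?_ hc
        rw [add_mul, one_mul, one_div_mul_eq_div]
        linarith
    _ = _ := by rw [mul_rpow (by positivity) (by positivity), ← rpow_mul ht0.le, neg_mul]

lemma log_sub_div_log_rpow_le {ε w t : ℝ} (hc : 0 ≤ c) (hε : 0 < ε) (hw : 1 ≤ log w)
    (ht0 : 0 < t) (htw : t < w) :
    ((log w - log t) / log w) ^ c ≤ (1 + 1 / ε) ^ c * t ^ (-(ε * c)) + 1 := by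
  have hlog : 0 < log w := by linarith
  have hr0 : 0 ≤ (log w - log t) / log w :=
    div_nonneg (by linarith [log_lt_log ht0 htw]) hlog.le
  rcases le_or_gt t 1 with ht1 | ht1
  · have hlog0 : 0 ≤ log t⁻¹ := log_nonneg (one_le_inv_iff₀.mpr ⟨ht0, ht1⟩)
    have hr : (log w - log t) / log w ≤ 1 + log t⁻¹ := by
      rw [sub_div, div_self hlog.ne', sub_eq_add_neg, ← neg_div, ← log_inv]
      gcongr
      exact div_le_self hlog0 hw
    calc _ ≤ (1 + log t⁻¹) ^ c := rpow_le_rpow hr0 hr hc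
      _ ≤ _ := one_add_log_inv_rpow_le hc hε ht0 ht1
      _ ≤ _ := le_add_of_nonneg_right zero_le_one
  · have hr : (log w - log t) / log w ≤ 1 :=
      (div_le_one hlog).mpr (by linarith [log_pos ht1])
    calc _ ≤ (1 : ℝ) := rpow_le_one hr0 hr hc
      _ ≤ _ := le_add_of_nonneg_left (mul_nonneg (by positivity) (by positivity))

lemma norm_rescaledIntegrand_le {ε w t : ℝ} (hc : 0 ≤ c) (hε : 0 < ε) (hw : 1 ≤ log w)
    (ht : 0 < t) :
    ‖rescaledIntegrand a c s w t‖
      ≤ (1 + 1 / ε) ^ c * (t ^ (a - ε * c) * (1 + t) ^ (-s)) + t ^ a * (1 + t) ^ (-s) := by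
  by_cases htw : t < w
  · have hr0 : 0 ≤ (log w - log t) / log w :=
      div_nonneg (sub_nonneg.mpr (log_le_log ht htw.le)) (by linarith)
    rw [rescaledIntegrand, indicator_of_mem (show t ∈ Ioo 0 w from ⟨ht, htw⟩), norm_of_nonneg
      (mul_nonneg (mul_nonneg (by positivity) (rpow_nonneg hr0 c)) (by positivity))]
    calc t ^ a * ((log w - log t) / log w) ^ c * (1 + t) ^ (-s)
        ≤ t ^ a * ((1 + 1 / ε) ^ c * t ^ (-(ε * c)) + 1) * (1 + t) ^ (-s) := by
          gcongr
          exact log_sub_div_log_rpow_le hc hε hw ht htw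
      _ = _ := by
          rw [sub_eq_add_neg, rpow_add ht]
          ring
  · rw [rescaledIntegrand, indicator_of_notMem (fun h => htw h.2), norm_zero]
    positivity

lemma tendsto_integral_rescaledIntegrand (ha : -1 < a) (hc : 0 ≤ c) (hs : a + 1 < s) :
    Tendsto (fun w => ∫ t in Ioi 0, rescaledIntegrand a c s w t) atTop
      (𝓝 (∫ t in Ioi (0 : ℝ), t ^ a * (1 + t) ^ (-s))) := by
  obtain ⟨ε, hε, hεc⟩ : ∃ ε > 0, ε * c < a + 1 := by
    refine ⟨(a + 1) / (c + 1), div_pos (by linarith) (by linarith), ?_⟩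
    rw [div_mul_eq_mul_div, div_lt_iff₀ (by positivity)]
    nlinarith
  refine tendsto_integral_filter_of_dominated_convergence
    (fun t => (1 + 1 / ε) ^ c * (t ^ (a - ε * c) * (1 + t) ^ (-s)) + t ^ a * (1 + t) ^ (-s))
    ?_ ?_ ?_ ?_
  · refine Eventually.of_forall fun w =>
      (Measurable.indicator ?_ measurableSet_Ioo).aestronglyMeasurable
    fun_prop
  · filter_upwards [eventually_ge_atTop (exp 1)] with w hw
    have hlog : 1 ≤ log w := by simpa using log_le_log (exp_pos 1) hw
    exact ae_restrict_of_forall_mem measurableSet_Ioi fun t ht =>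
      norm_rescaledIntegrand_le hc hε hlog ht
  · have hεc' : 0 ≤ ε * c := by positivity
    exact ((integrableOn_rpow_mul_one_add_rpow_neg (by linarith) (by linarith)).const_mul _).add
      (integrableOn_rpow_mul_one_add_rpow_neg ha hs)
  · exact ae_restrict_of_forall_mem measurableSet_Ioi fun t ht =>
      tendsto_rescaledIntegrand ht

lemma tendsto_log_rpow_neg_mul_rpow_mul_integral (ha : -1 < a) (hc : 0 ≤ c) (hs : a + 1 < s) :
    Tendsto (fun w => log w ^ (-c) * w ^ (a + 1) *
        ∫ l in Ioo (0 : ℝ) 1, l ^ a * log (1 / l) ^ c * (1 + w * l) ^ (-s))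
      atTop (𝓝 (∫ t in Ioi (0 : ℝ), t ^ a * (1 + t) ^ (-s))) := by
  refine (tendsto_integral_rescaledIntegrand ha hc hs).congr' ?_
  filter_upwards [eventually_gt_atTop 1] with w hw
  exact (log_rpow_neg_mul_rpow_mul_integral_eq hw).symm

end LogRescaling

/-- For p ≥ 3, n ≥ 3 and b ≥ 1,
lim_{w→∞} (log w) · [∫₀¹ λ^{p/2−2}(log(1/λ))^{b−1}(1+wλ)^{−(p+n)/2} dλ] /
  [∫₀¹ λ^{p/2−2}(log(1/λ))^b (1+wλ)^{−(p+n)/2−1} dλ] = (p+n)/(n+2). -/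
theorem stmt6 (p n : ℝ) (hp : 3 ≤ p) (hn : 3 ≤ n) (b : ℝ) (hb : 1 ≤ b) :
    Tendsto (fun w : ℝ => Real.log w *
      ((∫ l in Set.Ioo (0 : ℝ) 1,
          l ^ (p / 2 - 2) * Real.log (1 / l) ^ (b - 1) * (1 + w * l) ^ (-(p + n) / 2)) /
        (∫ l in Set.Ioo (0 : ℝ) 1,
          l ^ (p / 2 - 2) * Real.log (1 / l) ^ b * (1 + w * l) ^ (-(p + n) / 2 - 1))))
      atTop (nhds ((p + n) / (n + 2))) := by
  have ha : -1 < p / 2 - 2 := by linarith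
  have hs : p / 2 - 2 + 1 < (p + n) / 2 := by linarith
  have hN := tendsto_log_rpow_neg_mul_rpow_mul_integral (c := b - 1) ha (by linarith) hs
  have hD := tendsto_log_rpow_neg_mul_rpow_mul_integral (c := b) (s := (p + n) / 2 + 1) ha
    (by linarith) (by linarith)
  have hlimit := integral_rpow_mul_one_add_rpow_neg_div_succ ha hs
  rw [show (p + n) / 2 - (p / 2 - 2) - 1 = (n + 2) / 2 by ring,
    div_div_div_cancel_right₀ two_ne_zero] at hlimit
  rw [← hlimit]
  refine (hN.div hD (integral_rpow_mul_one_add_rpow_neg_pos ha (by linarith)).ne').congr' ?_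
  filter_upwards [eventually_gt_atTop 1] with w hw
  have hlog : 0 < log w := log_pos hw
  have hscale : ∀ N D : ℝ, log w ^ (-(b - 1)) * w ^ (p / 2 - 2 + 1) * N
      / (log w ^ (-b) * w ^ (p / 2 - 2 + 1) * D) = log w * (N / D) := by
    intro N D
    rw [show -(b - 1) = 1 + -b by ring, rpow_add hlog, rpow_one]
    field_simp
  simp only [Pi.div_apply, hscale, neg_div, show -((p + n) / 2) - 1 = -((p + n) / 2 + 1) by ring]
end
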